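/- arXiv:1906.11985 — 8 statements merged into one kernel-verified Lean document; each statement's English description precedes it below -/
import Mathlib

section
/- Let f : ℝⁿ → ℝ be differentiable, let x, v ∈ ℝⁿ, and define y_α = α·x + (1−α)·v. Then for any c ≥ 0 there exists α ∈ [0,1] such that α·⟨∇f(y_α), x − v⟩ ≤ c·(f(x) − f(y_α)). -/
/-!
Minimise `g α = f (α • x + (1 - α) • v)` over `[0, 1]` at some `α₀`. Moving from `α₀` towards `0`
cannot decrease `g`, so `α₀ * g' α₀ ≤ 0`; and `g α₀ ≤ g 1 = f x`, so the right-hand side is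
nonnegative.
-/

open RealInnerProductSpace Set

lemma IsMinOn.mul_derivWithin_nonpos {g : ℝ → ℝ} {a b d : ℝ} (hmin : IsMinOn g (Icc 0 b) a)
    (ha : a ∈ Icc 0 b) (hd : HasDerivWithinAt g d (Icc 0 b) a) : a * d ≤ 0 := by
  have hcone : (0 : ℝ) - a ∈ posTangentConeAt (Icc 0 b) a := by
    apply sub_mem_posTangentConeAt_of_segment_subset
    rw [segment_symm, segment_eq_Icc ha.1]
    exact Icc_subset_Icc le_rfl ha.2
  simpa only [zero_sub, ContinuousLinearMap.toSpanSingleton_apply, smul_eq_mul, neg_mul,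
    Left.nonneg_neg_iff] using hmin.localize.hasFDerivWithinAt_nonneg hd.hasFDerivWithinAt hcone

lemma exists_mem_Icc_mul_fderiv_nonpos_and_le {E : Type*} [NormedAddCommGroup E]
    [NormedSpace ℝ E] {f : E → ℝ} (hf : Differentiable ℝ f) (x v : E) :
    ∃ α ∈ Icc (0 : ℝ) 1, α * fderiv ℝ f (α • x + (1 - α) • v) (x - v) ≤ 0 ∧
      f (α • x + (1 - α) • v) ≤ f x := by
  have hy : ∀ α : ℝ, α • x + (1 - α) • v = AffineMap.lineMap v x α := fun α => by
    rw [AffineMap.lineMap_apply_module, add_comm]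
  simp only [hy]
  have hg : ∀ α, HasDerivAt (f ∘ AffineMap.lineMap v x)
      (fderiv ℝ f (AffineMap.lineMap v x α) (x - v)) α := fun α =>
    (hf _).hasFDerivAt.comp_hasDerivAt α AffineMap.hasDerivAt_lineMap
  obtain ⟨α, hα, hmin⟩ := isCompact_Icc.exists_isMinOn (nonempty_Icc.2 (zero_le_one (α := ℝ)))
    (hf.continuous.comp AffineMap.lineMap_continuous).continuousOn
  refine ⟨α, hα, hmin.mul_derivWithin_nonpos hα (hg α).hasDerivWithinAt, ?_⟩
  simpa using hmin (right_mem_Icc.2 zero_le_one)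

theorem exists_good_alpha {n : ℕ}
    (f : EuclideanSpace ℝ (Fin n) → ℝ) (hdiff : Differentiable ℝ f)
    (x v : EuclideanSpace ℝ (Fin n)) (c : ℝ) (hc : 0 ≤ c) :
    ∃ α ∈ Set.Icc (0:ℝ) 1,
      α * ⟪gradient f (α • x + (1 - α) • v), x - v⟫ ≤
        c * (f x - f (α • x + (1 - α) • v)) := by
  obtain ⟨α, hα, hderiv, hval⟩ := exists_mem_Icc_mul_fderiv_nonpos_and_le hdiff x v
  refine ⟨α, hα, ?_⟩
  rw [inner_gradient_left]
  exact hderiv.trans (mul_nonneg hc (sub_nonneg.2 hval))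
end

section
/- Define the sequence ω⁽⁻¹⁾ = 1 and ω⁽ᵏ⁾ = (1/2)·ω⁽ᵏ⁻¹⁾·(√((ω⁽ᵏ⁻¹⁾)² + 4) − ω⁽ᵏ⁻¹⁾) for k ≥ 0. Then ω⁽ᵏ⁾ ≤ 4/(k+6) for all k ≥ 0. -/
/-- Here `ω 0` denotes ω⁽⁻¹⁾ and `ω (k+1)` denotes ω⁽ᵏ⁾. -/
theorem omega_upper_bound (ω : ℕ → ℝ) (h0 : ω 0 = 1)
    (hrec : ∀ k : ℕ, ω (k+1) = (1/2) * (ω k * (Real.sqrt ((ω k)^2 + 4) - ω k))) :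
    ∀ k : ℕ, ω (k+1) ≤ 4 / (k + 6) := by
  have hpos : ∀ k, 0 < ω k := by
    intro k
    induction k with
    | zero => rw [h0]; norm_num
    | succ n ih =>
      rw [hrec n]
      have hs : ω n < Real.sqrt ((ω n)^2 + 4) := by
        rw [Real.lt_sqrt ih.le]
        nlinarith
      have : 0 < ω n * (Real.sqrt ((ω n)^2 + 4) - ω n) :=
        mul_pos ih (by linarith)
      linarith
  intro k
  induction k with
  | zero =>
    have h1 := hrec 0
    rw [h0] at h1
    rw [h1]
    have h := Real.sq_sqrt (show (0:ℝ) ≤ (1:ℝ)^2+4 by norm_num)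
    have h2 := Real.sqrt_nonneg ((1:ℝ)^2+4)
    set x := Real.sqrt ((1:ℝ)^2+4) with hx
    have h5 : x ≤ 7/3 := by nlinarith
    push_cast
    nlinarith [h5]
  | succ n ih =>
    have ha : 0 < ω (n+1) := hpos (n+1)
    set a := ω (n+1) with hadef
    set s := Real.sqrt (a^2 + 4) with hsdef
    have hs2 : s^2 = a^2 + 4 := Real.sq_sqrt (by positivity)
    have hsa : a < s := by
      rw [hsdef, Real.lt_sqrt ha.le]
      nlinarith
    have hs2' : (2:ℝ) ≤ s := by
      nlinarith [Real.sqrt_nonneg (a^2+4)]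
    have hn : (0:ℝ) < (n:ℝ) + 6 := by positivity
    have han : a * ((n:ℝ) + 6) ≤ 4 := by
      rw [le_div_iff₀ hn] at ih
      exact ih
    have h1 : a * (s - a) * (s + a) = 4 * a := by nlinarith [hs2]
    have key : a * (s - a) * ((n:ℝ) + 7) * (s + a) ≤ 8 * (s + a) := by
      nlinarith [h1, han, hs2', ha]
    have hspos : (0:ℝ) < s + a := by linarith
    have key2 : a * (s - a) * ((n:ℝ) + 7) ≤ 8 :=
      le_of_mul_le_mul_right key hspos
    rw [hrec (n+1)]
    rw [← hadef, ← hsdef]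
    have hn7 : (0:ℝ) < ((n:ℕ)+1:ℕ) + 6 := by positivity
    rw [le_div_iff₀ (by push_cast; linarith : (0:ℝ) < ((n+1:ℕ):ℝ) + 6)]
    push_cast
    nlinarith [key2]
end

section
/- Define the sequence ω⁽⁻¹⁾ = 1 and ω⁽ᵏ⁾ = (1/2)·ω⁽ᵏ⁻¹⁾·(√((ω⁽ᵏ⁻¹⁾)² + 4) − ω⁽ᵏ⁻¹⁾) for k ≥ 0. Then ω⁽ᵏ⁾ ≥ 1/(k+2) for all k ≥ 0. -/
lemma omega_key (c x : ℝ) (hc : 1 ≤ c) (hx : x ≥ 1 / c) :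
    (1/2) * (x * (Real.sqrt (x^2 + 4) - x)) ≥ 1 / (c + 1) := by
  have hc0 : (0:ℝ) < c := by linarith
  have hc1 : (0:ℝ) < c + 1 := by linarith
  have hx0 : 0 < x := lt_of_lt_of_le (by positivity) hx
  have hsqrt : Real.sqrt (x^2 + 4) ≥ x + 2 / ((c+1) * x) := by
    rw [ge_iff_le, show x + 2 / ((c+1)*x) = Real.sqrt ((x + 2 / ((c+1)*x))^2) from
      (Real.sqrt_sq (by positivity)).symm]
    apply Real.sqrt_le_sqrt
    have hxx : x^2 ≥ 1 / c^2 := by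
      rw [ge_iff_le, div_le_iff₀ (by positivity)]
      have hcx : 1 ≤ c * x := by
        rw [show (1:ℝ) = c * (1/c) by field_simp]
        exact mul_le_mul_of_nonneg_left hx (le_of_lt hc0)
      nlinarith
    have h1 : 2 / ((c+1)*x) ≤ 2 * c / (c+1) := by
      rw [div_le_div_iff₀ (by positivity) hc1]
      have : 1 ≤ c * x := by
        rw [show (1:ℝ) = c * (1/c) by field_simp]
        exact mul_le_mul_of_nonneg_left hx (le_of_lt hc0)
      nlinarith
    have h2 : (x + 2 / ((c+1)*x))^2 = x^2 + 4/(c+1) + 4/((c+1)*x)^2 := by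
      field_simp; ring
    rw [h2]
    have h3 : 4/((c+1)*x)^2 ≤ 4 * c^2 / (c+1)^2 := by
      rw [div_le_div_iff₀ (by positivity) (by positivity)]
      have hcx : 1 ≤ c * x := by
        rw [show (1:ℝ) = c * (1/c) by field_simp]
        exact mul_le_mul_of_nonneg_left hx (le_of_lt hc0)
      have hcx2 : 1 ≤ (c*x)^2 := by nlinarith
      nlinarith [mul_le_mul_of_nonneg_left hcx2 (sq_nonneg (c+1))]
    have h4 : 4/(c+1) + 4 * c^2 / (c+1)^2 ≤ 4 := by
      rw [div_add_div _ _ (ne_of_gt hc1) (by positivity), div_le_iff₀ (by positivity)]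
      nlinarith
    linarith
  have : x * (Real.sqrt (x^2+4) - x) ≥ x * (2 / ((c+1)*x)) := by
    apply mul_le_mul_of_nonneg_left (by linarith) (le_of_lt hx0)
  have heq : x * (2 / ((c+1)*x)) = 2 / (c+1) := by field_simp
  rw [heq] at this
  rw [ge_iff_le, div_le_iff₀ hc1]
  rw [ge_iff_le, div_le_iff₀ hc1] at this
  linarith

/-- Here `ω 0` denotes ω⁽⁻¹⁾ and `ω (k+1)` denotes ω⁽ᵏ⁾. -/
theorem omega_lower_bound (ω : ℕ → ℝ) (h0 : ω 0 = 1)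
    (hrec : ∀ k : ℕ, ω (k+1) = (1/2) * (ω k * (Real.sqrt ((ω k)^2 + 4) - ω k))) :
    ∀ k : ℕ, ω (k+1) ≥ 1 / (k + 2) := by
  intro k
  induction k with
  | zero =>
    have := omega_key 1 (ω 0) le_rfl (by rw [h0]; norm_num)
    rw [hrec 0]; norm_num at this ⊢; linarith
  | succ n ih =>
    have hc : (1:ℝ) ≤ (n:ℝ) + 2 := by linarith [(Nat.cast_nonneg n : (0:ℝ) ≤ n)]
    have := omega_key ((n:ℝ)+2) (ω (n+1)) hc (by exact_mod_cast ih)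
    rw [hrec (n+1)]
    push_cast
    convert this using 2 <;> ring
end

section
/- If f : 𝒳 → ℝ is differentiable on an open convex set 𝒳 ⊆ ℝⁿ with minimizer x* ∈ 𝒳, γ ∈ (0,1], and f satisfies f(x*) ≥ f(x) + (1/γ)·⟨∇f(x), x* − x⟩ for all x ∈ 𝒳 (the case μ = 0), then for all x ∈ 𝒳 and t ∈ [0,1], f(t·x* + (1−t)·x) ≤ γt·f(x*) + (1−γt)·f(x). -/
/-! Along the segment `c u = u • x⋆ + (1 - u) • x`, the quasar-convexity inequality at `c u` reads
`(1 - u) g' u + γ (g u - f x⋆) ≤ 0` for `g = f ∘ c`. Hence `(g u - f x⋆) (1 - u) ^ (-γ)` is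
nonincreasing, so `g t - f x⋆ ≤ (1 - t) ^ γ (f x - f x⋆)`, and Bernoulli's inequality
`(1 - t) ^ γ ≤ 1 - γ t` for `γ ≤ 1` finishes the proof, the gap `f x - f x⋆` being nonnegative. -/

open RealInnerProductSpace Set

theorem hasDerivAt_mul_one_sub_rpow_neg {h : ℝ → ℝ} {h' γ u : ℝ} (hh : HasDerivAt h h' u)
    (hu : u < 1) :
    HasDerivAt (fun v => h v * (1 - v) ^ (-γ))
      (((1 - u) * h' + γ * h u) * (1 - u) ^ (-γ - 1)) u := by
  have hne : 1 - u ≠ 0 := sub_ne_zero.2 hu.ne'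
  have hpow : HasDerivAt (fun v : ℝ => (1 - v) ^ (-γ)) (-1 * -γ * (1 - u) ^ (-γ - 1)) u :=
    ((hasDerivAt_id u).const_sub 1).rpow_const (Or.inl hne)
  refine (hh.mul hpow).congr_deriv ?_
  rw [Real.rpow_sub_one hne]
  field_simp

theorem le_mul_one_sub_rpow_of_hasDerivAt {h h' : ℝ → ℝ} {γ t : ℝ} (ht0 : 0 ≤ t) (ht1 : t < 1)
    (hderiv : ∀ u ∈ Icc 0 t, HasDerivAt h (h' u) u)
    (hineq : ∀ u ∈ Icc 0 t, (1 - u) * h' u + γ * h u ≤ 0) :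
    h t ≤ h 0 * (1 - t) ^ γ := by
  have hψ : ∀ u ∈ Icc 0 t, HasDerivAt (fun v => h v * (1 - v) ^ (-γ))
      (((1 - u) * h' u + γ * h u) * (1 - u) ^ (-γ - 1)) u := fun u hu =>
    hasDerivAt_mul_one_sub_rpow_neg (hderiv u hu) (hu.2.trans_lt ht1)
  have hanti : AntitoneOn (fun v => h v * (1 - v) ^ (-γ)) (Icc 0 t) := by
    refine antitoneOn_of_hasDerivWithinAt_nonpos (convex_Icc 0 t)
      (fun u hu => (hψ u hu).continuousAt.continuousWithinAt)
      (fun u hu => (hψ u (interior_subset hu)).hasDerivWithinAt) fun u hu => ?_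
    have hu := interior_subset hu
    exact mul_nonpos_of_nonpos_of_nonneg (hineq u hu)
      (Real.rpow_nonneg (by linarith [hu.2]) _)
  have hψt := hanti (left_mem_Icc.2 ht0) (right_mem_Icc.2 ht0) ht0
  have hpos : 0 < 1 - t := sub_pos.2 ht1
  simp only [sub_zero, Real.one_rpow, mul_one] at hψt
  calc h t = h t * (1 - t) ^ (-γ) * (1 - t) ^ γ := by
        rw [mul_assoc, ← Real.rpow_add hpos, neg_add_cancel, Real.rpow_zero, mul_one]
    _ ≤ h 0 * (1 - t) ^ γ := mul_le_mul_of_nonneg_right hψt (Real.rpow_nonneg hpos.le γ)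

theorem hasDerivAt_comp_segment {F : Type*} [NormedAddCommGroup F] [InnerProductSpace ℝ F]
    [CompleteSpace F] {f : F → ℝ} {x y : F} {u : ℝ}
    (hf : DifferentiableAt ℝ f (u • y + (1 - u) • x)) :
    HasDerivAt (fun v : ℝ => f (v • y + (1 - v) • x))
      ⟪gradient f (u • y + (1 - u) • x), y - x⟫ u := by
  have hc : HasDerivAt (fun v : ℝ => v • y + (1 - v) • x) (y - x) u := by
    convert ((hasDerivAt_id u).smul_const (y - x)).add_const x using 1
    · ext v
      simp only [id]
      module
    · simp
  simpa [Function.comp_def] using hf.hasGradientAt.hasFDerivAt.comp_hasDerivAt u hc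

theorem rpow_one_sub_le_one_sub_mul {γ t : ℝ} (ht : t ≤ 1) (hγ0 : 0 ≤ γ) (hγ1 : γ ≤ 1) :
    (1 - t) ^ γ ≤ 1 - γ * t := by
  simpa [sub_eq_add_neg, mul_comm] using
    rpow_one_add_le_one_add_mul_self (s := -t) (by linarith) hγ0 hγ1

theorem quasar_convex_segment_bound_general {n : ℕ}
    (s : Set (EuclideanSpace ℝ (Fin n))) (hconv : Convex ℝ s)
    (f : EuclideanSpace ℝ (Fin n) → ℝ)
    (hdiff : ∀ x ∈ s, DifferentiableAt ℝ f x)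
    (xstar : EuclideanSpace ℝ (Fin n)) (hxs : xstar ∈ s)
    (hmin : ∀ x ∈ s, f xstar ≤ f x)
    (γ : ℝ) (hγ : γ ∈ Set.Ioc (0:ℝ) 1)
    (hquasar : ∀ x ∈ s, f xstar ≥ f x + (1/γ) * ⟪gradient f x, xstar - x⟫) :
    ∀ x ∈ s, ∀ t ∈ Set.Icc (0:ℝ) 1,
      f (t • xstar + (1 - t) • x) ≤ γ * t * f xstar + (1 - γ * t) * f x := by
  intro x hx t ⟨ht0, ht1⟩
  have hgap : 0 ≤ f x - f xstar := sub_nonneg.2 (hmin x hx)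
  rcases ht1.eq_or_lt with rfl | ht1
  · simp only [one_smul, sub_self, zero_smul, add_zero]
    linarith [mul_nonneg (sub_nonneg.2 hγ.2) hgap]
  have hseg : ∀ u ∈ Icc (0:ℝ) t, u • xstar + (1 - u) • x ∈ s := fun u hu =>
    hconv hxs hx hu.1 (by linarith [hu.2]) (by ring)
  have hdissip : ∀ u ∈ Icc (0:ℝ) t,
      (1 - u) * ⟪gradient f (u • xstar + (1 - u) • x), xstar - x⟫
        + γ * (f (u • xstar + (1 - u) • x) - f xstar) ≤ 0 := fun u hu => by
    have hq := hquasar _ (hseg u hu)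
    rw [show xstar - (u • xstar + (1 - u) • x) = (1 - u) • (xstar - x) by module,
      real_inner_smul_right, ge_iff_le, ← mul_le_mul_iff_of_pos_left hγ.1, mul_add, ← mul_assoc,
      mul_one_div_cancel hγ.1.ne', one_mul] at hq
    linarith
  have hdecay := le_mul_one_sub_rpow_of_hasDerivAt
    (h := fun u => f (u • xstar + (1 - u) • x) - f xstar) ht0 ht1
    (fun u hu => (hasDerivAt_comp_segment (hdiff _ (hseg u hu))).sub_const _) hdissip
  simp only [zero_smul, sub_zero, one_smul, zero_add] at hdecay
  have hbern := rpow_one_sub_le_one_sub_mul ht1.le hγ.1.le hγ.2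
  linarith [mul_le_mul_of_nonneg_left hbern hgap]

theorem quasar_convex_segment_bound {n : ℕ}
    (s : Set (EuclideanSpace ℝ (Fin n))) (hs : IsOpen s) (hconv : Convex ℝ s)
    (f : EuclideanSpace ℝ (Fin n) → ℝ)
    (hdiff : ∀ x ∈ s, DifferentiableAt ℝ f x)
    (xstar : EuclideanSpace ℝ (Fin n)) (hxs : xstar ∈ s)
    (hmin : ∀ x ∈ s, f xstar ≤ f x)
    (γ : ℝ) (hγ : γ ∈ Set.Ioc (0:ℝ) 1)
    (hquasar : ∀ x ∈ s, f xstar ≥ f x + (1/γ) * ⟪gradient f x, xstar - x⟫) :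
    ∀ x ∈ s, ∀ t ∈ Set.Icc (0:ℝ) 1,
      f (t • xstar + (1 - t) • x) ≤ γ * t * f xstar + (1 - γ * t) * f x :=
  quasar_convex_segment_bound_general s hconv f hdiff xstar hxs hmin γ hγ hquasar
end

section
/- If f : 𝒳 → ℝ is differentiable on an open convex set 𝒳 ⊆ ℝⁿ with minimizer x*, and for all x ∈ 𝒳 and t ∈ [0,1] the inequality f(tx* + (1−t)x) + t(1 − t/(2−γ))·(γμ/2)·‖x* − x‖² ≤ γt·f(x*) + (1−γt)·f(x) holds, then for all x ∈ 𝒳: f(x*) ≥ f(x) + (1/γ)·⟨∇f(x), x* − x⟩ + (μ/2)·‖x* − x‖². -/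
/-! The segment bound says `f (x + t • (xstar - x)) ≤ f x + t * a + t ^ 2 * K` for `t ∈ (0, 1]`,
with `a = γ (f xstar - f x) - γ μ ‖xstar - x‖² / 2`. Dividing by `t` and letting `t → 0⁺` bounds the
directional derivative `⟪∇f x, xstar - x⟫` by `a`; dividing by `γ` gives the claim. -/

open RealInnerProductSpace Topology

theorem HasLineDerivAt.le_of_le_add_mul_add_sq {E : Type*} [AddCommGroup E] [Module ℝ E]
    {f : E → ℝ} {x v : E} {d a K : ℝ} (hf : HasLineDerivAt ℝ f d x v)
    (hle : ∀ t ∈ Set.Ioc (0 : ℝ) 1, f (x + t • v) ≤ f x + t * a + t ^ 2 * K) : d ≤ a := by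
  have hslope : Filter.Tendsto (slope (fun t : ℝ => f (x + t • v)) 0) (𝓝[>] 0) (𝓝 d) :=
    (hasDerivWithinAt_iff_tendsto_slope' (lt_irrefl 0)).1 (HasDerivAt.hasDerivWithinAt hf)
  have hbound : Filter.Tendsto (fun t : ℝ => a + t * K) (𝓝[>] 0) (𝓝 a) := by
    simpa using ((Filter.tendsto_id.mul_const K).const_add a).mono_left
      (nhdsWithin_le_nhds (a := (0 : ℝ)) (s := Set.Ioi 0))
  refine le_of_tendsto_of_tendsto hslope hbound ?_
  filter_upwards [Ioc_mem_nhdsGT (zero_lt_one' ℝ)] with t ht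
  have := hle t ht
  rw [slope_def_field, zero_smul, add_zero, sub_zero, div_le_iff₀ ht.1]
  nlinarith

theorem inner_gradient_le_of_segment_bound {F : Type*} [NormedAddCommGroup F]
    [InnerProductSpace ℝ F] [CompleteSpace F] {f : F → ℝ} {x xstar : F} {γ μ : ℝ}
    (hf : DifferentiableAt ℝ f x)
    (hseg : ∀ t ∈ Set.Icc (0 : ℝ) 1,
      f (t • xstar + (1 - t) • x) + t * (1 - t / (2 - γ)) * (γ * μ / 2) * ‖xstar - x‖ ^ 2 ≤
        γ * t * f xstar + (1 - γ * t) * f x) :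
    ⟪gradient f x, xstar - x⟫ ≤ γ * (f xstar - f x) - γ * μ / 2 * ‖xstar - x‖ ^ 2 := by
  rw [gradient, InnerProductSpace.toDual_symm_apply]
  refine (hf.hasFDerivAt.hasLineDerivAt (xstar - x)).le_of_le_add_mul_add_sq
    (K := γ * μ / 2 * ‖xstar - x‖ ^ 2 / (2 - γ)) fun t ht => ?_
  have h := hseg t (Set.Ioc_subset_Icc_self ht)
  rw [show t • xstar + (1 - t) • x = x + t • (xstar - x) by
    rw [smul_sub, sub_smul, one_smul]; abel] at h
  have hexpand : t * (1 - t / (2 - γ)) * (γ * μ / 2) * ‖xstar - x‖ ^ 2 =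
      t * (γ * μ / 2 * ‖xstar - x‖ ^ 2) - t ^ 2 * (γ * μ / 2 * ‖xstar - x‖ ^ 2 / (2 - γ)) := by
    ring
  linarith

theorem segment_bound_implies_strong_quasar_general {n : ℕ}
    (s : Set (EuclideanSpace ℝ (Fin n)))
    (f : EuclideanSpace ℝ (Fin n) → ℝ)
    (hdiff : ∀ x ∈ s, DifferentiableAt ℝ f x)
    (xstar : EuclideanSpace ℝ (Fin n))
    (γ μ : ℝ) (hγ : γ ∈ Set.Ioc (0:ℝ) 1)
    (hseg : ∀ x ∈ s, ∀ t ∈ Set.Icc (0:ℝ) 1,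
      f (t • xstar + (1 - t) • x) + t * (1 - t / (2 - γ)) * (γ * μ / 2) * ‖xstar - x‖^2 ≤
        γ * t * f xstar + (1 - γ * t) * f x) :
    ∀ x ∈ s, f xstar ≥ f x + (1/γ) * ⟪gradient f x, xstar - x⟫ + (μ/2) * ‖xstar - x‖^2 := by
  intro x hx
  have h := inner_gradient_le_of_segment_bound (hdiff x hx) (hseg x hx)
  have hdiv : (1 / γ) * ⟪gradient f x, xstar - x⟫ ≤ (f xstar - f x) - μ / 2 * ‖xstar - x‖ ^ 2 := by
    rw [one_div, inv_mul_le_iff₀ hγ.1]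
    linarith
  linarith

theorem segment_bound_implies_strong_quasar {n : ℕ}
    (s : Set (EuclideanSpace ℝ (Fin n))) (hs : IsOpen s) (hconv : Convex ℝ s)
    (f : EuclideanSpace ℝ (Fin n) → ℝ)
    (hdiff : ∀ x ∈ s, DifferentiableAt ℝ f x)
    (xstar : EuclideanSpace ℝ (Fin n)) (hxs : xstar ∈ s)
    (hmin : ∀ x ∈ s, f xstar ≤ f x)
    (γ μ : ℝ) (hγ : γ ∈ Set.Ioc (0:ℝ) 1) (hμ : 0 ≤ μ)
    (hseg : ∀ x ∈ s, ∀ t ∈ Set.Icc (0:ℝ) 1,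
      f (t • xstar + (1 - t) • x) + t * (1 - t / (2 - γ)) * (γ * μ / 2) * ‖xstar - x‖^2 ≤
        γ * t * f xstar + (1 - γ * t) * f x) :
    ∀ x ∈ s, f xstar ≥ f x + (1/γ) * ⟪gradient f x, xstar - x⟫ + (μ/2) * ‖xstar - x‖^2 :=
  segment_bound_implies_strong_quasar_general s f hdiff xstar γ μ hγ hseg
end

section
/- If f is (γ,μ)-strongly quasar-convex with minimizer x*, then f(x) ≥ f(x*) + (γμ/(2(2−γ)))·‖x* − x‖² for all x. -/
/-!
Along the ray `t ↦ x* + t v`, `v = x - x*`, the quasar inequality says `γ w ≤ t w'` for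
`w t = f (x* + t v) - f x* - K t²`, where `K` is the claimed growth constant times `‖v‖²`.
Hence `t ^ (-γ) * w t` is nondecreasing on `(0, ∞)`. As `x*` is a minimizer, `w 0 = w' 0 = 0`,
so `w t = o(t)` and, because `γ ≤ 1`, `t ^ (-γ) * w t → 0` as `t → 0⁺`. Thus `w 1 ≥ 0`.
-/

open RealInnerProductSpace Filter Topology Set

section RealFunction

variable {γ : ℝ} {w w' : ℝ → ℝ}

theorem monotoneOn_rpow_neg_mul_of_mul_le_mul_deriv
    (hw : ∀ t > 0, HasDerivAt w (w' t) t) (h : ∀ t > 0, γ * w t ≤ t * w' t) :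
    MonotoneOn (fun t => t ^ (-γ) * w t) (Ioi 0) := by
  have hderiv : ∀ t > 0, HasDerivAt (fun t => t ^ (-γ) * w t)
      (-γ * t ^ (-γ - 1) * w t + t ^ (-γ) * w' t) t := fun t ht =>
    (Real.hasDerivAt_rpow_const (Or.inl ht.ne')).mul (hw t ht)
  refine monotoneOn_of_hasDerivWithinAt_nonneg (convex_Ioi 0)
    (fun t ht => (hderiv t ht).continuousAt.continuousWithinAt)
    (fun t ht => (hderiv t (interior_subset ht)).hasDerivWithinAt) fun t ht => ?_
  rw [interior_Ioi] at ht
  have ht : (0 : ℝ) < t := ht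
  have hsplit : t ^ (-γ) = t ^ (-γ - 1) * t := by
    rw [Real.rpow_sub ht, Real.rpow_one, div_mul_cancel₀ _ ht.ne']
  calc (0 : ℝ) ≤ t ^ (-γ - 1) * (t * w' t - γ * w t) :=
        mul_nonneg (Real.rpow_nonneg ht.le _) (sub_nonneg.2 (h t ht))
    _ = _ := by rw [hsplit]; ring

theorem tendsto_rpow_neg_mul_nhdsGT_zero_of_hasDerivAt_zero (hγ : γ ≤ 1)
    (hw : HasDerivAt w 0 0) (hw0 : w 0 = 0) :
    Tendsto (fun t => t ^ (-γ) * w t) (𝓝[>] 0) (𝓝 0) := by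
  have hslope : Tendsto (fun t => w t / t) (𝓝[>] 0) (𝓝 0) := by
    refine ((hasDerivAt_iff_tendsto_slope.1 hw).mono_left
      (nhdsWithin_mono _ fun t ht => ne_of_gt ht)).congr fun t => ?_
    rw [slope_def_field, hw0, sub_zero, sub_zero]
  have hpow : Tendsto (fun t : ℝ => t ^ (1 - γ)) (𝓝[>] 0) (𝓝 ((0 : ℝ) ^ (1 - γ))) :=
    (Real.continuousAt_rpow_const 0 _ (Or.inr (sub_nonneg.2 hγ))).tendsto.mono_left
      nhdsWithin_le_nhds
  refine (mul_zero ((0 : ℝ) ^ (1 - γ)) ▸ hpow.mul hslope).congr' ?_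
  filter_upwards [self_mem_nhdsWithin] with t (ht : 0 < t)
  rw [Real.rpow_sub ht, Real.rpow_one, Real.rpow_neg ht.le]
  field_simp

theorem nonneg_of_mul_le_mul_deriv (hγ : γ ≤ 1) (hw : ∀ t, HasDerivAt w (w' t) t)
    (hw0 : w 0 = 0) (hw'0 : w' 0 = 0) (h : ∀ t > 0, γ * w t ≤ t * w' t) {t : ℝ} (ht : 0 < t) :
    0 ≤ w t := by
  have hmono := monotoneOn_rpow_neg_mul_of_mul_le_mul_deriv (fun s _ => hw s) h
  have hlim := tendsto_rpow_neg_mul_nhdsGT_zero_of_hasDerivAt_zero hγ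
    (by simpa only [hw'0] using hw 0) hw0
  have hscaled : 0 ≤ t ^ (-γ) * w t := by
    refine le_of_tendsto hlim ?_
    filter_upwards [Ioo_mem_nhdsGT ht] with s hs
    exact hmono hs.1 ht hs.2.le
  exact nonneg_of_mul_nonneg_right hscaled (Real.rpow_pos_of_pos ht _)

end RealFunction

section InnerProductSpace

variable {E : Type*} [NormedAddCommGroup E] [InnerProductSpace ℝ E] [CompleteSpace E]

def StronglyQuasarConvex (γ μ : ℝ) (f : E → ℝ) (xstar : E) : Prop :=
  ∀ x, f x + (1 / γ) * ⟪gradient f x, xstar - x⟫ + (μ / 2) * ‖xstar - x‖ ^ 2 ≤ f xstar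

variable {f : E → ℝ} {γ μ : ℝ} {xstar : E}

theorem hasDerivAt_comp_add_smul {x v : E} {t : ℝ} (hf : DifferentiableAt ℝ f (x + t • v)) :
    HasDerivAt (fun s : ℝ => f (x + s • v)) ⟪gradient f (x + t • v), v⟫ t := by
  have hline : HasDerivAt (fun s : ℝ => x + s • v) v t := by
    simpa using ((hasDerivAt_id t).smul_const v).const_add x
  exact hf.hasGradientAt.hasFDerivAt.comp_hasDerivAt t hline

theorem StronglyQuasarConvex.mul_sub_add_le_mul_inner (hq : StronglyQuasarConvex γ μ f xstar)
    (hγ : 0 < γ) (v : E) (t : ℝ) :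
    γ * (f (xstar + t • v) - f xstar) + γ * μ / 2 * t ^ 2 * ‖v‖ ^ 2
      ≤ t * ⟪gradient f (xstar + t • v), v⟫ := by
  have h := hq (xstar + t • v)
  rw [sub_add_cancel_left, inner_neg_right, real_inner_smul_right, norm_neg, norm_smul,
    Real.norm_eq_abs, mul_pow, sq_abs] at h
  have h' := mul_le_mul_of_nonneg_left h hγ.le
  field_simp at h'
  linarith

theorem StronglyQuasarConvex.quadratic_growth (hq : StronglyQuasarConvex γ μ f xstar)
    (hf : Differentiable ℝ f) (hγ₀ : 0 < γ) (hγ₁ : γ ≤ 1) (hmin : ∀ x, f xstar ≤ f x) (x : E) :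
    f xstar + γ * μ / (2 * (2 - γ)) * ‖xstar - x‖ ^ 2 ≤ f x := by
  set v := x - xstar
  set K := γ * μ / (2 * (2 - γ)) * ‖v‖ ^ 2
  have hu : ∀ t, HasDerivAt (fun s : ℝ => f (xstar + s • v)) ⟪gradient f (xstar + t • v), v⟫ t :=
    fun t => hasDerivAt_comp_add_smul (hf _)
  have hu'0 : ⟪gradient f (xstar + (0 : ℝ) • v), v⟫ = 0 :=
    IsLocalMin.hasDerivAt_eq_zero (Eventually.of_forall fun s => by simpa using hmin _) (hu 0)
  have hK : (2 - γ) * K = γ * μ / 2 * ‖v‖ ^ 2 := by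
    have : 2 - γ ≠ 0 := by linarith
    simp only [K]
    field_simp
  have hw := nonneg_of_mul_le_mul_deriv (w := fun t => f (xstar + t • v) - f xstar - K * t ^ 2)
    (w' := fun t => ⟪gradient f (xstar + t • v), v⟫ - K * (2 * t)) hγ₁
    (fun t => ((hu t).sub_const _).sub (by simpa using (hasDerivAt_pow 2 t).const_mul K))
    (by simp) (by simpa using hu'0)
    (fun t _ => by linear_combination hq.mul_sub_add_le_mul_inner hγ₀ v t + t ^ 2 * hK) one_pos
  simp only [one_smul, one_pow, mul_one, v, add_sub_cancel] at hw
  rw [norm_sub_rev]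
  linarith

end InnerProductSpace

theorem strongly_quasar_growth_general {n : ℕ}
    (f : EuclideanSpace ℝ (Fin n) → ℝ) (hdiff : Differentiable ℝ f)
    (γ μ : ℝ) (hγ : γ ∈ Set.Ioc (0:ℝ) 1)
    (xstar : EuclideanSpace ℝ (Fin n)) (hmin : ∀ x, f xstar ≤ f x)
    (hquasar : ∀ x, f xstar ≥ f x + (1/γ) * ⟪gradient f x, xstar - x⟫
      + (μ/2) * ‖xstar - x‖^2) :
    ∀ x, f x ≥ f xstar + (γ * μ / (2 * (2 - γ))) * ‖xstar - x‖^2 :=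
  fun x => StronglyQuasarConvex.quadratic_growth hquasar hdiff hγ.1 hγ.2 hmin x

theorem strongly_quasar_growth {n : ℕ}
    (f : EuclideanSpace ℝ (Fin n) → ℝ) (hdiff : Differentiable ℝ f)
    (γ μ : ℝ) (hγ : γ ∈ Set.Ioc (0:ℝ) 1) (hμ : 0 ≤ μ)
    (xstar : EuclideanSpace ℝ (Fin n)) (hmin : ∀ x, f xstar ≤ f x)
    (hquasar : ∀ x, f xstar ≥ f x + (1/γ) * ⟪gradient f x, xstar - x⟫
      + (μ/2) * ‖xstar - x‖^2) :
    ∀ x, f x ≥ f xstar + (γ * μ / (2 * (2 - γ))) * ‖xstar - x‖^2 :=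
  strongly_quasar_growth_general f hdiff γ μ hγ xstar hmin hquasar
end

section
/- If f is γ-quasar-convex with respect to a minimizer x*, then the set of all minimizers of f is star-convex with star center x*; i.e., if y also minimizes f, then tx* + (1−t)y minimizes f for all t ∈ [0,1]. -/
/-! At a minimizer `x*`, quasar-convexity forces `⟪∇f z, x* - z⟫ ≤ 0` everywhere, so `f` is
nonincreasing along each segment from a point towards `x*`; starting from another minimizer `y`,
it therefore stays minimal along the whole segment `[y, x*]`. -/

open RealInnerProductSpace Set AffineMap

theorem antitoneOn_comp_lineMap_of_fderiv_sub_nonpos {E : Type*} [NormedAddCommGroup E]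
    [NormedSpace ℝ E] {f : E → ℝ} (hf : Differentiable ℝ f) {x y : E}
    (h : ∀ s ∈ Ioo (0 : ℝ) 1, fderiv ℝ f (lineMap y x s) (x - lineMap y x s) ≤ 0) :
    AntitoneOn (fun s : ℝ => f (lineMap y x s)) (Icc 0 1) := by
  have hderiv : ∀ s : ℝ,
      HasDerivAt (fun s => f (lineMap y x s)) (fderiv ℝ f (lineMap y x s) (x - y)) s :=
    fun s => (hf _).hasFDerivAt.comp_hasDerivAt s hasDerivAt_lineMap
  refine antitoneOn_of_deriv_nonpos (convex_Icc 0 1)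
    (fun s _ => (hderiv s).continuousAt.continuousWithinAt)
    (fun s _ => (hderiv s).differentiableAt.differentiableWithinAt) fun s hs => ?_
  rw [interior_Icc] at hs
  -- Along the segment the direction `x - y` is a positive multiple of `x - lineMap y x s`.
  have hs' := h s hs
  rw [show x - lineMap y x s = (1 - s) • (x - y) from right_vsub_lineMap y x s, map_smul,
    smul_eq_mul] at hs'
  rw [(hderiv s).deriv]
  exact nonpos_of_mul_nonpos_right hs' (sub_pos.2 hs.2)

theorem quasar_minimizers_star_convex {n : ℕ}
    (f : EuclideanSpace ℝ (Fin n) → ℝ) (hdiff : Differentiable ℝ f)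
    (γ : ℝ) (hγ : γ ∈ Set.Ioc (0:ℝ) 1)
    (xstar : EuclideanSpace ℝ (Fin n)) (hmin : ∀ x, f xstar ≤ f x)
    (hquasar : ∀ x, f xstar ≥ f x + (1/γ) * ⟪gradient f x, xstar - x⟫) :
    ∀ y, (∀ x, f y ≤ f x) → ∀ t ∈ Set.Icc (0:ℝ) 1,
      ∀ x, f (t • xstar + (1 - t) • y) ≤ f x := by
  intro y hy t ht x
  have hdescent : ∀ z, fderiv ℝ f z (xstar - z) ≤ 0 := fun z => by
    rw [← inner_gradient_left]
    have hq := hquasar z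
    have hm := hmin z
    exact nonpos_of_mul_nonpos_right (by linarith) (one_div_pos.2 hγ.1)
  have hanti := antitoneOn_comp_lineMap_of_fderiv_sub_nonpos (x := xstar) (y := y) hdiff
    fun s _ => hdescent _
  calc f (t • xstar + (1 - t) • y) = f (lineMap y xstar t) := by
        rw [lineMap_apply_module, add_comm]
    _ ≤ f (lineMap y xstar (0 : ℝ)) := hanti (left_mem_Icc.2 zero_le_one) ht ht.1
    _ = f y := by rw [lineMap_apply_zero]
    _ ≤ f x := hy x
end

section
/- Define Υ(θ) = 120·∫₁^θ t²(t−1)/(1+t²) dt. Then for all θ ∉ (−0.1, 0.1), 40·(θ − 1)·Υ'(θ) ≥ Υ(θ), where Υ'(θ) = 120·θ²(θ−1)/(1+θ²). -/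
noncomputable def Ups (θ : ℝ) : ℝ :=
  120 * ∫ t in (1:ℝ)..θ, t^2 * (t - 1) / (1 + t^2)

/-!
Write `Υ = 120 F` with `F θ = ∫₁^θ f` and `f t = t²(t - 1)/(1 + t²)`, so the claim is
`F θ ≤ 40 (θ - 1) f θ = 40 (θ - 1)² θ²/(1 + θ²)`. The integrand `f` lies between `0` and each of
`t - 1` and `t²(t - 1)`, so `F θ` is bounded by the integrals of these two polynomials,
`(θ - 1)²/2` and `(θ - 1)²(3θ² + 2θ + 1)/12`, whatever the sign of `θ - 1`. The first bound
settles `|θ| ≥ 1`, the second `0.1 ≤ |θ| ≤ 1`.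
-/

open intervalIntegral MeasureTheory

theorem integral_le_integral_of_le_right_of_le_left {f g : ℝ → ℝ} {a θ : ℝ}
    (hf : IntervalIntegrable f volume a θ) (hg : IntervalIntegrable g volume a θ)
    (hright : ∀ t, a ≤ t → f t ≤ g t) (hleft : ∀ t, t ≤ a → g t ≤ f t) :
    ∫ t in a..θ, f t ≤ ∫ t in a..θ, g t := by
  rcases le_total a θ with haθ | hθa
  · exact integral_mono_on haθ hf hg fun t ht => hright t ht.1
  · rw [integral_symm θ a, integral_symm θ a, neg_le_neg_iff]
    exact integral_mono_on hθa hg.symm hf.symm fun t ht => hleft t ht.2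

noncomputable def upsIntegrand (t : ℝ) : ℝ := t ^ 2 * (t - 1) / (1 + t ^ 2)

theorem continuous_upsIntegrand : Continuous upsIntegrand :=
  Continuous.div (by fun_prop) (by fun_prop) fun t => by positivity

theorem hasDerivAt_Ups (θ : ℝ) : HasDerivAt Ups (120 * upsIntegrand θ) θ :=
  (integral_hasDerivAt_right (continuous_upsIntegrand.intervalIntegrable _ _)
    (continuous_upsIntegrand.stronglyMeasurableAtFilter _ _)
    continuous_upsIntegrand.continuousAt).const_mul 120

theorem integral_upsIntegrand_le_half_sq (θ : ℝ) :
    ∫ t in (1:ℝ)..θ, upsIntegrand t ≤ (θ - 1) ^ 2 / 2 := by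
  have hweight (t : ℝ) : upsIntegrand t = t ^ 2 / (1 + t ^ 2) * (t - 1) := by
    unfold upsIntegrand; ring
  have hweight_le (t : ℝ) : t ^ 2 / (1 + t ^ 2) ≤ 1 :=
    (div_le_one (by positivity)).2 (by linarith)
  have hint : ∫ t in (1:ℝ)..θ, (t - 1) = (θ - 1) ^ 2 / 2 := by
    rw [intervalIntegral.integral_sub intervalIntegrable_id intervalIntegrable_const, integral_id,
      intervalIntegral.integral_const, smul_eq_mul]
    ring
  rw [← hint]
  refine integral_le_integral_of_le_right_of_le_left
    (continuous_upsIntegrand.intervalIntegrable _ _)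
    ((by fun_prop : Continuous fun t : ℝ => t - 1).intervalIntegrable _ _) (fun t ht => ?_)
    fun t ht => ?_
  · rw [hweight]
    exact mul_le_of_le_one_left (by linarith) (hweight_le t)
  · rw [hweight]
    exact le_mul_of_le_one_left (by linarith) (hweight_le t)

theorem integral_upsIntegrand_le_quartic (θ : ℝ) :
    ∫ t in (1:ℝ)..θ, upsIntegrand t ≤ (θ - 1) ^ 2 * (3 * θ ^ 2 + 2 * θ + 1) / 12 := by
  have hint : ∫ t in (1:ℝ)..θ, t ^ 2 * (t - 1) = (θ - 1) ^ 2 * (3 * θ ^ 2 + 2 * θ + 1) / 12 := by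
    simp only [mul_sub, mul_one, ← pow_succ]
    rw [intervalIntegral.integral_sub ((continuous_pow 3).intervalIntegrable _ _)
      ((continuous_pow 2).intervalIntegrable _ _), integral_pow, integral_pow]
    ring
  rw [← hint]
  refine integral_le_integral_of_le_right_of_le_left
    (continuous_upsIntegrand.intervalIntegrable _ _)
    ((by fun_prop : Continuous fun t : ℝ => t ^ 2 * (t - 1)).intervalIntegrable _ _)
    (fun t ht => ?_) fun t ht => ?_
  · exact div_le_self (mul_nonneg (by positivity) (by linarith))
      (le_add_of_nonneg_right (sq_nonneg t))
  · have hneg : t ^ 2 * (t - 1) ≤ 0 := mul_nonpos_of_nonneg_of_nonpos (sq_nonneg t) (by linarith)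
    rw [upsIntegrand, le_div_iff₀ (by positivity)]
    nlinarith [mul_nonpos_of_nonpos_of_nonneg hneg (sq_nonneg t)]

theorem integral_upsIntegrand_le_of_le_abs {θ : ℝ} (hθ : 0.1 ≤ |θ|) :
    ∫ t in (1:ℝ)..θ, upsIntegrand t ≤ (θ - 1) ^ 2 * (40 * θ ^ 2 / (1 + θ ^ 2)) := by
  have hD : 0 < 1 + θ ^ 2 := by positivity
  have hθ_sq : 1 ≤ 100 * θ ^ 2 := by nlinarith [sq_abs θ]
  have hθ_le : θ ≤ 10 * θ ^ 2 := by nlinarith [sq_abs θ, le_abs_self θ]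
  rcases le_total 1 (θ ^ 2) with hbig | hsmall
  · calc ∫ t in (1:ℝ)..θ, upsIntegrand t ≤ (θ - 1) ^ 2 / 2 := integral_upsIntegrand_le_half_sq θ
      _ = (θ - 1) ^ 2 * (1 / 2) := by ring
      _ ≤ (θ - 1) ^ 2 * (40 * θ ^ 2 / (1 + θ ^ 2)) := by
        refine mul_le_mul_of_nonneg_left ?_ (sq_nonneg _)
        rw [le_div_iff₀ hD]
        linarith
  · calc ∫ t in (1:ℝ)..θ, upsIntegrand t ≤ (θ - 1) ^ 2 * (3 * θ ^ 2 + 2 * θ + 1) / 12 :=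
          integral_upsIntegrand_le_quartic θ
      _ = (θ - 1) ^ 2 * ((3 * θ ^ 2 + 2 * θ + 1) / 12) := by ring
      _ ≤ (θ - 1) ^ 2 * (40 * θ ^ 2 / (1 + θ ^ 2)) := by
        refine mul_le_mul_of_nonneg_left ?_ (sq_nonneg _)
        rw [div_le_div_iff₀ (by norm_num) hD]
        -- `3θ² + 2θ + 1 ≤ 123 θ²` and `1 + θ² ≤ 2`
        nlinarith

theorem Ups_quasar_inequality :
    ∀ θ : ℝ, θ ∉ Set.Ioo (-0.1 : ℝ) 0.1 →
      40 * (θ - 1) * deriv Ups θ ≥ Ups θ := by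
  intro θ hθ
  have hUps : Ups θ = 120 * ∫ t in (1:ℝ)..θ, upsIntegrand t := rfl
  have hrhs : 40 * (θ - 1) * (120 * upsIntegrand θ) =
      120 * ((θ - 1) ^ 2 * (40 * θ ^ 2 / (1 + θ ^ 2))) := by
    unfold upsIntegrand; ring
  rw [(hasDerivAt_Ups θ).deriv, hUps, hrhs, ge_iff_le, mul_le_mul_iff_right₀ (by norm_num)]
  refine integral_upsIntegrand_le_of_le_abs (le_abs'.2 ?_)
  simpa only [Set.mem_Ioo, not_and_or, not_lt] using hθ
end
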